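/- arXiv:1408.5620 — 3 statements merged into one kernel-verified Lean document; each statement's English description precedes it below -/
import Mathlib

section
/- (Existence of an elementary decomposition) Let (A,B) be a coisotropic pair in (V,ω). Then there exist pairwise ω-orthogonal symplectic subspaces V₁, V₂, V₃, V₄, V₅ with V = V₁ ⊕ V₂ ⊕ V₃ ⊕ V₄ ⊕ V₅ (internal direct sum), and subspaces Aᵢ, Bᵢ ⊆ Vᵢ with A = A₁ ⊕ ... ⊕ A₅ and B = B₁ ⊕ ... ⊕ B₅, such that: (A₁,B₁) is of type λ in V₁ (A₁ = B₁ lagrangian in V₁); (A₂,B₂) is of type δ in V₂ (A₂, B₂ lagrangian in V₂ with A₂ ∩ B₂ = 0); (A₃,B₃) is of type σ in V₃ (A₃ = B₃ = V₃); (A₄,B₄) is of type μ_B in V₄ (B₄ = V₄ and A₄ lagrangian in V₄); and (A₅,B₅) is of type μ_A in V₅ (A₅ = V₅ and B₅ lagrangian in V₅). -/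
open Module

variable {V : Type*} [AddCommGroup V] [Module ℝ V]

/-- The symplectic orthogonal of a subspace `W`:
`{v ∈ V | ω v w = 0 for all w ∈ W}`. -/
def sorth (ω : LinearMap.BilinForm ℝ V) (W : Submodule ℝ V) : Submodule ℝ V where
  carrier := {v | ∀ w ∈ W, ω v w = 0}
  add_mem' := by
    intro a b ha hb w hw
    simp only [Set.mem_setOf_eq] at *
    simp [ha w hw, hb w hw]
  zero_mem' := by intro w hw; simp
  smul_mem' := by
    intro c a ha w hw
    simp only [Set.mem_setOf_eq] at *
    simp [ha w hw]

/-- Two subspaces are `ω`-orthogonal. -/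
def OrthSub (ω : LinearMap.BilinForm ℝ V) (E F : Submodule ℝ V) : Prop :=
  ∀ e ∈ E, ∀ f ∈ F, ω e f = 0

/-- An elementary decomposition of a coisotropic pair `(A, B)`:
`V = V₁ ⊕ ⋯ ⊕ V₅` is an internal direct sum of pairwise `ω`-orthogonal symplectic
subspaces, `A = ⨁ Aᵢ`, `B = ⨁ Bᵢ` with `Aᵢ, Bᵢ ⊆ Vᵢ`, and the summand pairs are
of elementary types `(λ, δ, σ, μ_B, μ_A)` in this order. -/
def IsElemDecomp (ω : LinearMap.BilinForm ℝ V) (A B : Submodule ℝ V)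
    (Vs As Bs : Fin 5 → Submodule ℝ V) : Prop :=
  DirectSum.IsInternal Vs ∧
  (∀ i j, i ≠ j → OrthSub ω (Vs i) (Vs j)) ∧
  (∀ i, Vs i ⊓ sorth ω (Vs i) = ⊥) ∧
  (∀ i, As i ≤ Vs i) ∧ (∀ i, Bs i ≤ Vs i) ∧
  A = (⨆ i, As i) ∧ B = (⨆ i, Bs i) ∧
  -- type λ : A₁ = B₁ is lagrangian in V₁
  (As 0 = Bs 0 ∧ As 0 = sorth ω (As 0) ⊓ Vs 0) ∧
  -- type δ : A₂, B₂ lagrangian in V₂ with A₂ ⊓ B₂ = ⊥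
  (As 1 = sorth ω (As 1) ⊓ Vs 1 ∧ Bs 1 = sorth ω (Bs 1) ⊓ Vs 1 ∧ As 1 ⊓ Bs 1 = ⊥) ∧
  -- type σ : A₃ = B₃ = V₃
  (As 2 = Vs 2 ∧ Bs 2 = Vs 2) ∧
  -- type μ_B : B₄ = V₄ and A₄ lagrangian in V₄
  (Bs 3 = Vs 3 ∧ As 3 = sorth ω (As 3) ⊓ Vs 3) ∧
  -- type μ_A : A₅ = V₅ and B₅ lagrangian in V₅
  (As 4 = Vs 4 ∧ Bs 4 = sorth ω (Bs 4) ⊓ Vs 4)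

/-!
Work inside a symplectic subspace `W ⊇ A, B` in which `A` and `B` are coisotropic, and put
`a = A^ω ∩ W ⊆ A`, `b = B^ω ∩ W ⊆ B`. Pick `e` in the first nonzero one of `a ∩ b`, `a ∩ B`,
`b ∩ A`, `a` (or any `e ≠ 0` if all vanish, and then `A = B = W`), and a partner `f` with
`ω e f ≠ 0` in `W`, `B`, `A`, `b` (resp. `W`). The plane `U = ⟨e, f⟩` is symplectic and both `A`
and `B` split along `W = U ⊕ (U^ω ∩ W)`, their pieces in `U` forming a pair of type
`λ, μ_B, μ_A, δ` (resp. `σ`). The pieces in `U^ω ∩ W` are again coisotropic there, so induction on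
`dim W` decomposes the rest, and the planes of each type are collected into one `Vᵢ`.
-/

lemma eq_sup_inf_of_le_of_le_sup {α : Type*} [Lattice α] [IsModularLattice α] {a b x : α}
    (hb : b ≤ a) (ha : a ≤ b ⊔ x) : a = b ⊔ a ⊓ x := by
  rw [inf_comm, ← sup_inf_assoc_of_le _ hb, inf_eq_right.2 ha]

section Orthogonal

variable {ω : LinearMap.BilinForm ℝ V}

lemma sorth_anti {W X : Submodule ℝ V} (h : W ≤ X) : sorth ω X ≤ sorth ω W :=
  fun _ hv w hw => hv w (h hw)

lemma sorth_sup (X Y : Submodule ℝ V) : sorth ω (X ⊔ Y) = sorth ω X ⊓ sorth ω Y := by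
  refine le_antisymm (le_inf (sorth_anti le_sup_left) (sorth_anti le_sup_right)) ?_
  rintro v ⟨hX, hY⟩ w hw
  obtain ⟨x, hx, y, hy, rfl⟩ := Submodule.mem_sup.1 hw
  rw [map_add, hX x hx, hY y hy, add_zero]

lemma sorth_bot : sorth ω ⊥ = ⊤ :=
  eq_top_iff.2 fun v _ w hw => by rw [(Submodule.mem_bot ℝ).1 hw, map_zero]

lemma orthSub_iff_le_sorth {E F : Submodule ℝ V} : OrthSub ω E F ↔ E ≤ sorth ω F := Iff.rfl

lemma le_sorth_comm (halt : ω.IsAlt) {E F : Submodule ℝ V} : E ≤ sorth ω F ↔ F ≤ sorth ω E :=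
  ⟨fun h _ hf _ he => halt.isRefl _ _ (h he _ hf), fun h _ he _ hf => halt.isRefl _ _ (h hf _ he)⟩

lemma exists_ne_zero_of_notMem_sorth {X : Submodule ℝ V} {e : V} (he : e ∉ sorth ω X) :
    ∃ f ∈ X, ω e f ≠ 0 := by
  by_contra! h
  exact he h

def IsSymplectic (ω : LinearMap.BilinForm ℝ V) (U : Submodule ℝ V) : Prop :=
  U ⊓ sorth ω U = ⊥

def IsLagrangianIn (ω : LinearMap.BilinForm ℝ V) (L U : Submodule ℝ V) : Prop :=
  L = sorth ω L ⊓ U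

def IsCoisotropicIn (ω : LinearMap.BilinForm ℝ V) (A W : Submodule ℝ V) : Prop :=
  sorth ω A ⊓ W ≤ A

lemma IsCoisotropicIn.inf_sorth {A A₀ U W : Submodule ℝ V} (hA : IsCoisotropicIn ω A W)
    (hA₀ : A₀ ≤ U) (hsplit : A = A₀ ⊔ A ⊓ (sorth ω U ⊓ W)) :
    IsCoisotropicIn ω (A ⊓ (sorth ω U ⊓ W)) (sorth ω U ⊓ W) := by
  have hsorth : sorth ω A₀ ⊓ sorth ω (A ⊓ (sorth ω U ⊓ W)) ⊓ W ≤ A := by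
    rw [← sorth_sup, ← hsplit]
    exact hA
  have hW' : sorth ω U ⊓ W ≤ sorth ω A₀ := inf_le_left.trans (sorth_anti hA₀)
  refine le_inf (le_trans (le_inf (le_inf (inf_le_right.trans hW') inf_le_left) ?_) hsorth)
    inf_le_right
  exact inf_le_right.trans inf_le_right

lemma isSymplectic_bot : IsSymplectic ω ⊥ := bot_inf_eq _

lemma isLagrangianIn_bot : IsLagrangianIn ω ⊥ ⊥ := (inf_bot_eq _).symm

lemma IsSymplectic.notMem_sorth {U : Submodule ℝ V} (hU : IsSymplectic ω U) {e : V}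
    (heU : e ∈ U) (he : e ≠ 0) : e ∉ sorth ω U := by
  intro he'
  have hmem : e ∈ U ⊓ sorth ω U := ⟨heU, he'⟩
  rw [hU, Submodule.mem_bot] at hmem
  exact he hmem

lemma IsLagrangianIn.le {L U : Submodule ℝ V} (hL : IsLagrangianIn ω L U) : L ≤ U :=
  Eq.trans_le hL inf_le_right

lemma IsSymplectic.sup (halt : ω.IsAlt) {U T : Submodule ℝ V} (hU : IsSymplectic ω U)
    (hT : IsSymplectic ω T) (hUT : OrthSub ω U T) : IsSymplectic ω (U ⊔ T) := by
  have hTU : T ≤ sorth ω U := (le_sorth_comm halt).1 hUT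
  rw [IsSymplectic, sorth_sup, ← inf_assoc, sup_comm, sup_inf_assoc_of_le _ hTU, hU,
    sup_bot_eq]
  exact hT

lemma IsLagrangianIn.sup (halt : ω.IsAlt) {L M U T : Submodule ℝ V} (hL : IsLagrangianIn ω L U)
    (hM : IsLagrangianIn ω M T) (hUT : OrthSub ω U T) : IsLagrangianIn ω (L ⊔ M) (U ⊔ T) := by
  have hTL : T ≤ sorth ω L := ((le_sorth_comm halt).1 hUT).trans (sorth_anti hL.le)
  have hLM : L ≤ sorth ω M := (hL.le.trans hUT).trans (sorth_anti hM.le)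
  unfold IsLagrangianIn at hL hM ⊢
  symm
  calc sorth ω (L ⊔ M) ⊓ (U ⊔ T) = sorth ω M ⊓ (sorth ω L ⊓ U ⊔ T) := by
        rw [sorth_sup, inf_comm (sorth ω L), inf_assoc, inf_sup_assoc_of_le _ hTL]
    _ = sorth ω M ⊓ T ⊔ L := by rw [← hL, sup_comm, inf_sup_assoc_of_le _ hLM]
    _ = L ⊔ M := by rw [← hM, sup_comm]

lemma sup_inf_sup_eq_bot {U T A₁ B₁ A₂ B₂ : Submodule ℝ V} (hUT : U ⊓ T = ⊥)
    (hA₁ : A₁ ≤ U) (hB₁ : B₁ ≤ U) (hA₂ : A₂ ≤ T) (hB₂ : B₂ ≤ T)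
    (h₁ : A₁ ⊓ B₁ = ⊥) (h₂ : A₂ ⊓ B₂ = ⊥) : (A₁ ⊔ A₂) ⊓ (B₁ ⊔ B₂) = ⊥ := by
  rw [eq_bot_iff]
  rintro _ ⟨hA, hB⟩
  obtain ⟨a₁, ha₁, a₂, ha₂, rfl⟩ := Submodule.mem_sup.1 hA
  obtain ⟨b₁, hb₁, b₂, hb₂, hab⟩ := Submodule.mem_sup.1 hB
  have hdiff : a₁ - b₁ = b₂ - a₂ := sub_eq_sub_iff_add_eq_add.2 (by rw [← hab, add_comm b₁])
  have hUT' : a₁ - b₁ ∈ U ⊓ T :=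
    ⟨sub_mem (hA₁ ha₁) (hB₁ hb₁), hdiff ▸ sub_mem (hB₂ hb₂) (hA₂ ha₂)⟩
  rw [hUT, Submodule.mem_bot, sub_eq_zero] at hUT'
  subst hUT'
  obtain rfl : a₂ = b₂ := add_left_cancel hab.symm
  have h₁' : a₁ ∈ A₁ ⊓ B₁ := ⟨ha₁, hb₁⟩
  have h₂' : a₂ ∈ A₂ ⊓ B₂ := ⟨ha₂, hb₂⟩
  rw [h₁, Submodule.mem_bot] at h₁'
  rw [h₂, Submodule.mem_bot] at h₂'
  simp [h₁', h₂']

end Orthogonal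

section ElementaryTypes

variable {ω : LinearMap.BilinForm ℝ V}

/-- The types `λ, δ, σ, μ_B, μ_A`, numbered `0, …, 4` as in `IsElemDecomp`. -/
def IsElemType (ω : LinearMap.BilinForm ℝ V) :
    ℕ → Submodule ℝ V → Submodule ℝ V → Submodule ℝ V → Prop
  | 0, U, A, B => A = B ∧ IsLagrangianIn ω A U
  | 1, U, A, B => IsLagrangianIn ω A U ∧ IsLagrangianIn ω B U ∧ A ⊓ B = ⊥
  | 2, U, A, B => A = U ∧ B = U
  | 3, U, A, B => B = U ∧ IsLagrangianIn ω A U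
  | _ + 4, U, A, B => A = U ∧ IsLagrangianIn ω B U

lemma IsElemType.left_le {t : ℕ} {U A B : Submodule ℝ V} (h : IsElemType ω t U A B) : A ≤ U :=
  match t, h with
  | 0, h => h.2.le
  | 1, h => h.1.le
  | 2, h => h.1.le
  | 3, h => h.2.le
  | _ + 4, h => h.1.le

lemma IsElemType.right_le {t : ℕ} {U A B : Submodule ℝ V} (h : IsElemType ω t U A B) : B ≤ U :=
  match t, h with
  | 0, h => h.1 ▸ h.2.le
  | 1, h => h.2.1.le
  | 2, h => h.2.le
  | 3, h => h.1.le
  | _ + 4, h => h.2.le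

lemma isElemType_bot (t : ℕ) : IsElemType ω t ⊥ ⊥ ⊥ :=
  match t with
  | 0 => ⟨rfl, isLagrangianIn_bot⟩
  | 1 => ⟨isLagrangianIn_bot, isLagrangianIn_bot, inf_idem _⟩
  | 2 => ⟨rfl, rfl⟩
  | 3 => ⟨rfl, isLagrangianIn_bot⟩
  | _ + 4 => ⟨rfl, isLagrangianIn_bot⟩

lemma IsElemType.sup (halt : ω.IsAlt) {t : ℕ} {U T A₁ B₁ A₂ B₂ : Submodule ℝ V}
    (hUT : OrthSub ω U T) (hUT' : U ⊓ T = ⊥)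
    (h₁ : IsElemType ω t U A₁ B₁) (h₂ : IsElemType ω t T A₂ B₂) :
    IsElemType ω t (U ⊔ T) (A₁ ⊔ A₂) (B₁ ⊔ B₂) :=
  match t, h₁, h₂ with
  | 0, h₁, h₂ => ⟨by rw [h₁.1, h₂.1], h₁.2.sup halt h₂.2 hUT⟩
  | 1, h₁, h₂ => ⟨h₁.1.sup halt h₂.1 hUT, h₁.2.1.sup halt h₂.2.1 hUT,
      sup_inf_sup_eq_bot hUT' h₁.1.le h₁.2.1.le h₂.1.le h₂.2.1.le h₁.2.2 h₂.2.2⟩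
  | 2, h₁, h₂ => ⟨by rw [h₁.1, h₂.1], by rw [h₁.2, h₂.2]⟩
  | 3, h₁, h₂ => ⟨by rw [h₁.1, h₂.1], h₁.2.sup halt h₂.2 hUT⟩
  | _ + 4, h₁, h₂ => ⟨by rw [h₁.1, h₂.1], h₁.2.sup halt h₂.2 hUT⟩

/-- `IsElemDecomp` inside the subspace `W`; the sum `⨆ i, Vs i` is direct by
`iSupIndep_of_orthSub`. -/
structure IsRelElemDecomp (ω : LinearMap.BilinForm ℝ V) (W A B : Submodule ℝ V)
    (Vs As Bs : Fin 5 → Submodule ℝ V) : Prop where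
  iSup_eq : (⨆ i, Vs i) = W
  orth : ∀ i j, i ≠ j → OrthSub ω (Vs i) (Vs j)
  symplectic : ∀ i, IsSymplectic ω (Vs i)
  left_eq : A = ⨆ i, As i
  right_eq : B = ⨆ i, Bs i
  elemType : ∀ i : Fin 5, IsElemType ω i (Vs i) (As i) (Bs i)

namespace IsRelElemDecomp

variable {W A B : Submodule ℝ V} {Vs As Bs : Fin 5 → Submodule ℝ V}

lemma le (h : IsRelElemDecomp ω W A B Vs As Bs) (i : Fin 5) : Vs i ≤ W :=
  h.iSup_eq ▸ le_iSup Vs i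

lemma single (hW : IsSymplectic ω W) {t : Fin 5} (ht : IsElemType ω t W A B) :
    IsRelElemDecomp ω W A B (fun i => if i = t then W else ⊥) (fun i => if i = t then A else ⊥)
      (fun i => if i = t then B else ⊥) where
  iSup_eq := by simp [iSup_ite]
  orth i j hij := by
    by_cases hi : i = t
    · rw [if_pos hi, if_neg (hi ▸ hij.symm), orthSub_iff_le_sorth, sorth_bot]
      exact le_top
    · rw [if_neg hi, orthSub_iff_le_sorth]
      exact bot_le
  symplectic i := by
    split_ifs
    exacts [hW, isSymplectic_bot]
  left_eq := by simp [iSup_ite]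
  right_eq := by simp [iSup_ite]
  elemType i := by
    split_ifs with hi
    exacts [hi ▸ ht, isElemType_bot i]

lemma sup (halt : ω.IsAlt) {T A' B' : Submodule ℝ V} {Vs' As' Bs' : Fin 5 → Submodule ℝ V}
    (h : IsRelElemDecomp ω W A B Vs As Bs) (h' : IsRelElemDecomp ω T A' B' Vs' As' Bs')
    (hWT : OrthSub ω W T) (hWT' : W ⊓ T = ⊥) :
    IsRelElemDecomp ω (W ⊔ T) (A ⊔ A') (B ⊔ B') (Vs ⊔ Vs') (As ⊔ As') (Bs ⊔ Bs') := by
  have hcross : ∀ i j, OrthSub ω (Vs i) (Vs' j) := fun i j =>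
    ((h.le i).trans (orthSub_iff_le_sorth.1 hWT)).trans (sorth_anti (h'.le j))
  refine ⟨by simp only [Pi.sup_apply, iSup_sup_eq, h.iSup_eq, h'.iSup_eq], fun i j hij => ?_,
    fun i => (h.symplectic i).sup halt (h'.symplectic i) (hcross i i),
    by rw [h.left_eq, h'.left_eq]; exact iSup_sup_eq.symm,
    by rw [h.right_eq, h'.right_eq]; exact iSup_sup_eq.symm,
    fun i => (h.elemType i).sup halt (hcross i i)
      (bot_unique ((inf_le_inf (h.le i) (h'.le i)).trans hWT'.le)) (h'.elemType i)⟩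
  rw [Pi.sup_apply, Pi.sup_apply, orthSub_iff_le_sorth, sorth_sup]
  exact sup_le (le_inf (h.orth i j hij) (hcross i j))
    (le_inf ((le_sorth_comm halt).1 (hcross j i)) (h'.orth i j hij))

end IsRelElemDecomp

lemma iSupIndep_of_orthSub {ι : Type*} {Vs : ι → Submodule ℝ V}
    (horth : ∀ i j, i ≠ j → OrthSub ω (Vs i) (Vs j)) (hsymp : ∀ i, IsSymplectic ω (Vs i)) :
    iSupIndep Vs := fun i =>
  disjoint_iff.2 <| bot_unique <|
    (inf_le_inf_left _ (iSup₂_le fun j hj => horth j i hj)).trans (hsymp i).le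

end ElementaryTypes

section Plane

variable {ω : LinearMap.BilinForm ℝ V} {e f : V}

lemma mem_sorth_span_singleton {x : V} : x ∈ sorth ω (ℝ ∙ e) ↔ ω x e = 0 := by
  refine ⟨fun h => h e (Submodule.mem_span_singleton_self e), fun h w hw => ?_⟩
  obtain ⟨c, rfl⟩ := Submodule.mem_span_singleton.1 hw
  rw [map_smul, h, smul_zero]

lemma span_singleton_le_sorth (halt : ω.IsAlt) : ℝ ∙ e ≤ sorth ω (ℝ ∙ e) :=
  (Submodule.span_singleton_le_iff_mem _ _).2 (mem_sorth_span_singleton.2 (halt.self_eq_zero e))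

lemma apply_smul_add_smul_left (halt : ω.IsAlt) (a b : ℝ) :
    ω (a • e + b • f) e = -(b * ω e f) := by
  simp [halt.self_eq_zero, ← LinearMap.IsAlt.neg halt e f]

lemma apply_smul_add_smul_right (halt : ω.IsAlt) (a b : ℝ) :
    ω (a • e + b • f) f = a * ω e f := by
  simp [halt.self_eq_zero]

lemma span_pair_ne_bot (hef : ω e f ≠ 0) : Submodule.span ℝ {e, f} ≠ ⊥ := by
  refine (Submodule.ne_bot_iff _).2 ⟨e, Submodule.subset_span (Set.mem_insert e _), ?_⟩
  rintro rfl
  exact hef (by rw [map_zero, LinearMap.zero_apply])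

lemma isSymplectic_span_pair (halt : ω.IsAlt) (hef : ω e f ≠ 0) :
    IsSymplectic ω (Submodule.span ℝ {e, f}) := by
  refine eq_bot_iff.2 fun x hx => ?_
  obtain ⟨hx, hx'⟩ := Submodule.mem_inf.1 hx
  obtain ⟨a, b, rfl⟩ := Submodule.mem_span_pair.1 hx
  have he := hx' e (Submodule.subset_span (Set.mem_insert e _))
  have hf := hx' f (Submodule.subset_span (Set.mem_insert_of_mem e rfl))
  rw [apply_smul_add_smul_left halt, neg_eq_zero, mul_eq_zero, or_iff_left hef] at he
  rw [apply_smul_add_smul_right halt, mul_eq_zero, or_iff_left hef] at hf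
  simp [he, hf]

lemma isLagrangianIn_span_singleton (halt : ω.IsAlt) (hef : ω e f ≠ 0) :
    IsLagrangianIn ω (ℝ ∙ e) (Submodule.span ℝ {e, f}) := by
  refine le_antisymm (le_inf (span_singleton_le_sorth halt) (Submodule.span_mono (by simp)))
    fun x hx => ?_
  obtain ⟨hx, hxU⟩ := Submodule.mem_inf.1 hx
  obtain ⟨a, b, rfl⟩ := Submodule.mem_span_pair.1 hxU
  rw [mem_sorth_span_singleton, apply_smul_add_smul_left halt, neg_eq_zero, mul_eq_zero,
    or_iff_left hef] at hx
  rw [hx, zero_smul, add_zero]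
  exact Submodule.smul_mem _ a (Submodule.mem_span_singleton_self e)

lemma isLagrangianIn_span_singleton_right (halt : ω.IsAlt) (hef : ω e f ≠ 0) :
    IsLagrangianIn ω (ℝ ∙ f) (Submodule.span ℝ {e, f}) := by
  rw [Set.pair_comm]
  exact isLagrangianIn_span_singleton halt fun h =>
    hef (by rw [← neg_eq_zero, LinearMap.IsAlt.neg halt, h])

lemma span_singleton_inf_eq_bot (halt : ω.IsAlt) (hef : ω e f ≠ 0) :
    (ℝ ∙ e) ⊓ (ℝ ∙ f) = ⊥ := by
  have hU := isSymplectic_span_pair halt hef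
  rw [IsSymplectic, Submodule.span_insert, sorth_sup] at hU
  exact eq_bot_iff.2 <| hU ▸ le_inf (inf_le_left.trans le_sup_left)
    (inf_le_inf (span_singleton_le_sorth halt) (span_singleton_le_sorth halt))

def IsElemSummand (ω : LinearMap.BilinForm ℝ V) (W A B U : Submodule ℝ V) : Prop :=
  U ≤ W ∧ U ≠ ⊥ ∧ IsSymplectic ω U ∧ ∃ (t : Fin 5) (A₀ B₀ : Submodule ℝ V),
    IsElemType ω t U A₀ B₀ ∧ A = A₀ ⊔ A ⊓ (sorth ω U ⊓ W) ∧ B = B₀ ⊔ B ⊓ (sorth ω U ⊓ W)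

lemma isElemSummand_span_pair (halt : ω.IsAlt) {W A B A₀ B₀ : Submodule ℝ V} {e f : V}
    (heW : e ∈ W) (hfW : f ∈ W) (hef : ω e f ≠ 0) (t : Fin 5)
    (ht : IsElemType ω t (Submodule.span ℝ {e, f}) A₀ B₀)
    (hA : A = A₀ ⊔ A ⊓ (sorth ω (Submodule.span ℝ {e, f}) ⊓ W))
    (hB : B = B₀ ⊔ B ⊓ (sorth ω (Submodule.span ℝ {e, f}) ⊓ W)) :
    IsElemSummand ω W A B (Submodule.span ℝ {e, f}) :=
  ⟨Submodule.span_le.2 (Set.pair_subset heW hfW), span_pair_ne_bot hef,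
    isSymplectic_span_pair halt hef, t, A₀, B₀, ht, hA, hB⟩

end Plane

section FiniteDimensional

variable [FiniteDimensional ℝ V] {ω : LinearMap.BilinForm ℝ V}

lemma finrank_sorth_add (hω : ω.Nondegenerate) (halt : ω.IsAlt) (W : Submodule ℝ V) :
    finrank ℝ (sorth ω W) + finrank ℝ W = finrank ℝ V := by
  have horth : sorth ω W = ω.orthogonal W := by
    ext v
    exact ⟨fun h w hw => halt.isRefl _ _ (h w hw), fun h w hw => halt.isRefl _ _ (h w hw)⟩
  rw [horth, LinearMap.BilinForm.finrank_orthogonal hω]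
  have := Submodule.finrank_le W
  omega

lemma IsSymplectic.sup_sorth_eq_top (hω : ω.Nondegenerate) (halt : ω.IsAlt)
    {W : Submodule ℝ V} (hW : IsSymplectic ω W) : W ⊔ sorth ω W = ⊤ := by
  apply Submodule.eq_top_of_finrank_eq
  have hsum := Submodule.finrank_sup_add_finrank_inf_eq W (sorth ω W)
  rw [hW, finrank_bot, add_zero] at hsum
  have := finrank_sorth_add hω halt W
  omega

lemma IsSymplectic.sup_sorth_inf (hω : ω.Nondegenerate) (halt : ω.IsAlt)
    {U W : Submodule ℝ V} (hU : IsSymplectic ω U) (hUW : U ≤ W) : U ⊔ sorth ω U ⊓ W = W := by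
  rw [← sup_inf_assoc_of_le _ hUW, hU.sup_sorth_eq_top hω halt, top_inf_eq]

lemma finrank_sorth_inf_add (hω : ω.Nondegenerate) (halt : ω.IsAlt) {W A : Submodule ℝ V}
    (hW : IsSymplectic ω W) (hAW : A ≤ W) :
    finrank ℝ ↥(sorth ω A ⊓ W) + finrank ℝ A = finrank ℝ W := by
  have htop : sorth ω A ⊔ W = ⊤ := by
    rw [eq_top_iff, ← hW.sup_sorth_eq_top hω halt]
    exact sup_le le_sup_right (le_sup_of_le_left (sorth_anti hAW))
  have hsum := Submodule.finrank_sup_add_finrank_inf_eq (sorth ω A) W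
  rw [htop, finrank_top] at hsum
  have := finrank_sorth_add hω halt A
  have := Submodule.finrank_le W
  omega

lemma sorth_sorth_inf (hω : ω.Nondegenerate) (halt : ω.IsAlt) {W B : Submodule ℝ V}
    (hW : IsSymplectic ω W) (hBW : B ≤ W) : sorth ω (sorth ω B ⊓ W) ⊓ W = B := by
  have hle : B ≤ sorth ω (sorth ω B ⊓ W) ⊓ W :=
    le_inf ((le_sorth_comm halt).1 inf_le_left) hBW
  refine (Submodule.eq_of_le_of_finrank_le hle ?_).symm
  have := finrank_sorth_inf_add hω halt hW hBW
  have := finrank_sorth_inf_add hω halt hW (inf_le_right : sorth ω B ⊓ W ≤ W)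
  omega

lemma eq_of_sorth_inf_eq_bot (hω : ω.Nondegenerate) (halt : ω.IsAlt) {W A : Submodule ℝ V}
    (hW : IsSymplectic ω W) (hAW : A ≤ W) (hA : sorth ω A ⊓ W = ⊥) : A = W := by
  have := finrank_sorth_inf_add hω halt hW hAW
  rw [hA, finrank_bot, zero_add] at this
  exact Submodule.eq_of_le_of_finrank_le hAW this.ge

lemma IsSymplectic.sorth_inf (hω : ω.Nondegenerate) (halt : ω.IsAlt) {U W : Submodule ℝ V}
    (hU : IsSymplectic ω U) (hW : IsSymplectic ω W) (hUW : U ≤ W) :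
    IsSymplectic ω (sorth ω U ⊓ W) := by
  have hle : sorth ω U ⊓ W ⊓ sorth ω (sorth ω U ⊓ W) ≤
      sorth ω U ⊓ sorth ω (sorth ω U ⊓ W) := inf_le_inf_right _ inf_le_left
  rw [← sorth_sup, hU.sup_sorth_inf hω halt hUW] at hle
  exact eq_bot_iff.2 (le_trans (le_inf (inf_le_left.trans inf_le_right) hle) hW.le)

lemma finrank_sorth_inf_lt {U W : Submodule ℝ V} (hU : IsSymplectic ω U) (hU0 : U ≠ ⊥)
    (hUW : U ≤ W) : finrank ℝ ↥(sorth ω U ⊓ W) < finrank ℝ W := by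
  refine Submodule.finrank_lt_finrank_of_lt (lt_of_le_of_ne inf_le_right fun h => hU0 ?_)
  rw [← hU]
  exact (inf_eq_left.2 (hUW.trans (h.symm.le.trans inf_le_left))).symm

lemma IsLagrangianIn.sorth_inf_eq (hω : ω.Nondegenerate) (halt : ω.IsAlt)
    {L U W : Submodule ℝ V} (hU : IsSymplectic ω U) (hUW : U ≤ W) (hL : IsLagrangianIn ω L U) :
    sorth ω L ⊓ W = L ⊔ sorth ω U ⊓ W := by
  conv_lhs => rw [← hU.sup_sorth_inf hω halt hUW]
  rw [← inf_sup_assoc_of_le _ (inf_le_left.trans (sorth_anti hL.le)), ← hL]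

lemma IsCoisotropicIn.eq_span_singleton_sup_inf (hω : ω.Nondegenerate) (halt : ω.IsAlt)
    {A U W : Submodule ℝ V} {x : V} (hA : IsCoisotropicIn ω A W) (hAW : A ≤ W)
    (hU : IsSymplectic ω U) (hUW : U ≤ W) (hL : IsLagrangianIn ω (ℝ ∙ x) U)
    (hx : x ∈ sorth ω A) : A = (ℝ ∙ x) ⊔ A ⊓ (sorth ω U ⊓ W) := by
  have hxA : ℝ ∙ x ≤ sorth ω A := (Submodule.span_singleton_le_iff_mem _ _).2 hx
  refine eq_sup_inf_of_le_of_le_sup ((le_inf hxA (hL.le.trans hUW)).trans hA) ?_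
  rw [← hL.sorth_inf_eq hω halt hU hUW]
  exact le_inf ((le_sorth_comm halt).1 hxA) hAW

lemma eq_sup_sorth_inf_of_le (hω : ω.Nondegenerate) (halt : ω.IsAlt) {A U W : Submodule ℝ V}
    (hU : IsSymplectic ω U) (hUA : U ≤ A) (hAW : A ≤ W) : A = U ⊔ A ⊓ (sorth ω U ⊓ W) :=
  eq_sup_inf_of_le_of_le_sup hUA (by rwa [hU.sup_sorth_inf hω halt (hUA.trans hAW)])

lemma exists_isElemSummand_lambda (hω : ω.Nondegenerate) (halt : ω.IsAlt)
    {W A B : Submodule ℝ V} (hW : IsSymplectic ω W) (hAW : A ≤ W) (hBW : B ≤ W)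
    (hA : IsCoisotropicIn ω A W) (hB : IsCoisotropicIn ω B W)
    (h : (sorth ω A ⊓ W) ⊓ (sorth ω B ⊓ W) ≠ ⊥) : ∃ U, IsElemSummand ω W A B U := by
  obtain ⟨e, ⟨⟨heA, heW⟩, heB, -⟩, he0⟩ := (Submodule.ne_bot_iff _).1 h
  obtain ⟨f, hfW, hef⟩ := exists_ne_zero_of_notMem_sorth (hW.notMem_sorth heW he0)
  have hU := isSymplectic_span_pair halt hef
  have hUW := Submodule.span_le.2 (Set.pair_subset heW hfW)
  have hL := isLagrangianIn_span_singleton halt hef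
  exact ⟨_, isElemSummand_span_pair halt heW hfW hef 0 ⟨rfl, hL⟩
    (hA.eq_span_singleton_sup_inf hω halt hAW hU hUW hL heA)
    (hB.eq_span_singleton_sup_inf hω halt hBW hU hUW hL heB)⟩

lemma exists_isElemSummand_muB (hω : ω.Nondegenerate) (halt : ω.IsAlt)
    {W A B : Submodule ℝ V} (hAW : A ≤ W) (hBW : B ≤ W) (hA : IsCoisotropicIn ω A W)
    (hab : (sorth ω A ⊓ W) ⊓ (sorth ω B ⊓ W) = ⊥) (h : (sorth ω A ⊓ W) ⊓ B ≠ ⊥) :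
    ∃ U, IsElemSummand ω W A B U := by
  obtain ⟨e, ⟨⟨heA, heW⟩, heB⟩, he0⟩ := (Submodule.ne_bot_iff _).1 h
  have heB' : e ∉ sorth ω B := fun heB' =>
    he0 ((Submodule.eq_bot_iff _).1 hab e ⟨⟨heA, heW⟩, heB', heW⟩)
  obtain ⟨f, hfB, hef⟩ := exists_ne_zero_of_notMem_sorth heB'
  have hU := isSymplectic_span_pair halt hef
  have hUW := Submodule.span_le.2 (Set.pair_subset heW (hBW hfB))
  have hL := isLagrangianIn_span_singleton halt hef
  exact ⟨_, isElemSummand_span_pair halt heW (hBW hfB) hef 3 ⟨rfl, hL⟩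
    (hA.eq_span_singleton_sup_inf hω halt hAW hU hUW hL heA)
    (eq_sup_sorth_inf_of_le hω halt hU (Submodule.span_le.2 (Set.pair_subset heB hfB)) hBW)⟩

lemma exists_isElemSummand_muA (hω : ω.Nondegenerate) (halt : ω.IsAlt)
    {W A B : Submodule ℝ V} (hAW : A ≤ W) (hBW : B ≤ W) (hB : IsCoisotropicIn ω B W)
    (hab : (sorth ω A ⊓ W) ⊓ (sorth ω B ⊓ W) = ⊥) (h : (sorth ω B ⊓ W) ⊓ A ≠ ⊥) :
    ∃ U, IsElemSummand ω W A B U := by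
  obtain ⟨e, ⟨⟨heB, heW⟩, heA⟩, he0⟩ := (Submodule.ne_bot_iff _).1 h
  have heA' : e ∉ sorth ω A := fun heA' =>
    he0 ((Submodule.eq_bot_iff _).1 hab e ⟨⟨heA', heW⟩, heB, heW⟩)
  obtain ⟨f, hfA, hef⟩ := exists_ne_zero_of_notMem_sorth heA'
  have hU := isSymplectic_span_pair halt hef
  have hUW := Submodule.span_le.2 (Set.pair_subset heW (hAW hfA))
  have hL := isLagrangianIn_span_singleton halt hef
  exact ⟨_, isElemSummand_span_pair halt heW (hAW hfA) hef 4 ⟨rfl, hL⟩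
    (eq_sup_sorth_inf_of_le hω halt hU (Submodule.span_le.2 (Set.pair_subset heA hfA)) hAW)
    (hB.eq_span_singleton_sup_inf hω halt hBW hU hUW hL heB)⟩

lemma exists_isElemSummand_delta (hω : ω.Nondegenerate) (halt : ω.IsAlt)
    {W A B : Submodule ℝ V} (hW : IsSymplectic ω W) (hAW : A ≤ W) (hBW : B ≤ W)
    (hA : IsCoisotropicIn ω A W) (hB : IsCoisotropicIn ω B W)
    (haB : (sorth ω A ⊓ W) ⊓ B = ⊥) (h : sorth ω A ⊓ W ≠ ⊥) :
    ∃ U, IsElemSummand ω W A B U := by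
  obtain ⟨e, ⟨heA, heW⟩, he0⟩ := (Submodule.ne_bot_iff _).1 h
  have he : e ∉ sorth ω (sorth ω B ⊓ W) := fun he => he0 ((Submodule.eq_bot_iff _).1 haB e
    ⟨⟨heA, heW⟩, (sorth_sorth_inf hω halt hW hBW).le ⟨he, heW⟩⟩)
  obtain ⟨f, ⟨hfB, hfW⟩, hef⟩ := exists_ne_zero_of_notMem_sorth he
  have hU := isSymplectic_span_pair halt hef
  have hUW := Submodule.span_le.2 (Set.pair_subset heW hfW)
  have hLe := isLagrangianIn_span_singleton halt hef
  have hLf := isLagrangianIn_span_singleton_right halt hef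
  exact ⟨_, isElemSummand_span_pair halt heW hfW hef 1
    ⟨hLe, hLf, span_singleton_inf_eq_bot halt hef⟩
    (hA.eq_span_singleton_sup_inf hω halt hAW hU hUW hLe heA)
    (hB.eq_span_singleton_sup_inf hω halt hBW hU hUW hLf hfB)⟩

lemma exists_isElemSummand_sigma (hω : ω.Nondegenerate) (halt : ω.IsAlt)
    {W A B : Submodule ℝ V} (hW : IsSymplectic ω W) (hW0 : W ≠ ⊥) (hAW : A ≤ W) (hBW : B ≤ W)
    (ha : sorth ω A ⊓ W = ⊥) (hbA : (sorth ω B ⊓ W) ⊓ A = ⊥) :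
    ∃ U, IsElemSummand ω W A B U := by
  have hA : A = W := eq_of_sorth_inf_eq_bot hω halt hW hAW ha
  rw [hA, inf_eq_left.2 inf_le_right] at hbA
  have hB : B = W := eq_of_sorth_inf_eq_bot hω halt hW hBW hbA
  obtain ⟨e, heW, he0⟩ := (Submodule.ne_bot_iff _).1 hW0
  obtain ⟨f, hfW, hef⟩ := exists_ne_zero_of_notMem_sorth (hW.notMem_sorth heW he0)
  have hU := isSymplectic_span_pair halt hef
  have hUW := Submodule.span_le.2 (Set.pair_subset heW hfW)
  exact ⟨_, isElemSummand_span_pair halt heW hfW hef 2 ⟨rfl, rfl⟩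
    (eq_sup_sorth_inf_of_le hω halt hU (hUW.trans hA.ge) hAW)
    (eq_sup_sorth_inf_of_le hω halt hU (hUW.trans hB.ge) hBW)⟩

lemma exists_isElemSummand (hω : ω.Nondegenerate) (halt : ω.IsAlt)
    {W A B : Submodule ℝ V} (hW : IsSymplectic ω W) (hW0 : W ≠ ⊥) (hAW : A ≤ W) (hBW : B ≤ W)
    (hA : IsCoisotropicIn ω A W) (hB : IsCoisotropicIn ω B W) :
    ∃ U, IsElemSummand ω W A B U := by
  obtain hab | hab := ne_or_eq ((sorth ω A ⊓ W) ⊓ (sorth ω B ⊓ W)) ⊥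
  · exact exists_isElemSummand_lambda hω halt hW hAW hBW hA hB hab
  obtain haB | haB := ne_or_eq ((sorth ω A ⊓ W) ⊓ B) ⊥
  · exact exists_isElemSummand_muB hω halt hAW hBW hA hab haB
  obtain hbA | hbA := ne_or_eq ((sorth ω B ⊓ W) ⊓ A) ⊥
  · exact exists_isElemSummand_muA hω halt hAW hBW hB hab hbA
  obtain ha | ha := ne_or_eq (sorth ω A ⊓ W) ⊥
  · exact exists_isElemSummand_delta hω halt hW hAW hBW hA hB haB ha
  · exact exists_isElemSummand_sigma hω halt hW hW0 hAW hBW ha hbA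

lemma exists_isRelElemDecomp (hω : ω.Nondegenerate) (halt : ω.IsAlt) {W A B : Submodule ℝ V}
    (hW : IsSymplectic ω W) (hAW : A ≤ W) (hBW : B ≤ W)
    (hA : IsCoisotropicIn ω A W) (hB : IsCoisotropicIn ω B W) :
    ∃ Vs As Bs, IsRelElemDecomp ω W A B Vs As Bs := by
  induction hn : finrank ℝ W using Nat.strong_induction_on generalizing W A B with
  | _ n ih =>
    rcases eq_or_ne W ⊥ with rfl | hW0
    · obtain rfl := le_bot_iff.1 hAW
      obtain rfl := le_bot_iff.1 hBW
      exact ⟨_, _, _, IsRelElemDecomp.single isSymplectic_bot (t := 0) (isElemType_bot 0)⟩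
    obtain ⟨U, hUW, hU0, hU, t, A₀, B₀, ht, hAsplit, hBsplit⟩ :=
      exists_isElemSummand hω halt hW hW0 hAW hBW hA hB
    obtain ⟨Vs, As, Bs, hrest⟩ := ih _ (hn ▸ finrank_sorth_inf_lt hU hU0 hUW)
      (hU.sorth_inf hω halt hW hUW) inf_le_right inf_le_right
      (hA.inf_sorth ht.left_le hAsplit) (hB.inf_sorth ht.right_le hBsplit) rfl
    have hsum := (IsRelElemDecomp.single hU ht).sup halt hrest ((le_sorth_comm halt).1 inf_le_left)
      (bot_unique ((inf_le_inf_left U inf_le_left).trans hU.le))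
    rw [hU.sup_sorth_inf hω halt hUW, ← hAsplit, ← hBsplit] at hsum
    exact ⟨_, _, _, hsum⟩

end FiniteDimensional

lemma isSymplectic_top {ω : LinearMap.BilinForm ℝ V} (hω : ω.Nondegenerate) :
    IsSymplectic ω ⊤ :=
  (top_inf_eq _).trans <| eq_bot_iff.2 fun x hx =>
    (Submodule.mem_bot ℝ).2 (hω.1 x fun w => hx w trivial)

theorem exists_elementary_decomposition [FiniteDimensional ℝ V]
    (ω : LinearMap.BilinForm ℝ V) (hω : ω.Nondegenerate) (hωalt : ω.IsAlt)
    (A B : Submodule ℝ V) (hA : sorth ω A ≤ A) (hB : sorth ω B ≤ B) :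
    ∃ Vs As Bs : Fin 5 → Submodule ℝ V, IsElemDecomp ω A B Vs As Bs := by
  have hA' : IsCoisotropicIn ω A ⊤ := by rwa [IsCoisotropicIn, inf_top_eq]
  have hB' : IsCoisotropicIn ω B ⊤ := by rwa [IsCoisotropicIn, inf_top_eq]
  obtain ⟨Vs, As, Bs, h⟩ :=
    exists_isRelElemDecomp hω hωalt (isSymplectic_top hω) le_top le_top hA' hB'
  have hinternal : DirectSum.IsInternal Vs :=
    (DirectSum.isInternal_submodule_iff_iSupIndep_and_iSup_eq_top Vs).2
      ⟨iSupIndep_of_orthSub h.orth h.symplectic, h.iSup_eq⟩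
  exact ⟨Vs, As, Bs, hinternal, h.orth, h.symplectic, fun i => (h.elemType i).left_le,
    fun i => (h.elemType i).right_le, h.left_eq, h.right_eq,
    h.elemType 0, h.elemType 1, h.elemType 2, h.elemType 3, h.elemType 4⟩
end

section
/- (Type δ is elementary) Let A and B be lagrangian subspaces of (V,ω) with A ∩ B = 0. Suppose V = V₁ ⊕ ... ⊕ V_m is an internal direct sum of pairwise ω-orthogonal symplectic subspaces, and Aᵢ, Bᵢ ⊆ Vᵢ are coisotropic subspaces of Vᵢ such that A = A₁ ⊕ ... ⊕ A_m and B = B₁ ⊕ ... ⊕ B_m. Then for each i, Aᵢ and Bᵢ are lagrangian in Vᵢ and Aᵢ ∩ Bᵢ = 0, i.e. each summand pair (Aᵢ,Bᵢ) is of type δ. -/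
/-! Each `Aᵢ` lies in the lagrangian `A`, on which `ω` vanishes, so `Aᵢ` is isotropic; being also
coisotropic in `Vᵢ`, it is lagrangian there, and likewise `Bᵢ`. Finally `Aᵢ ∩ Bᵢ ⊆ A ∩ B = 0`. -/

open Module

variable {V : Type*} [AddCommGroup V] [Module ℝ V]

theorem sorth_antitone (ω : LinearMap.BilinForm ℝ V) : Antitone (sorth ω) :=
  fun _ _ hST _ hv w hw => hv w (hST hw)

theorem le_sorth_of_le_of_eq_sorth {ω : LinearMap.BilinForm ℝ V} {S L : Submodule ℝ V}
    (hSL : S ≤ L) (hL : L = sorth ω L) : S ≤ sorth ω S :=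
  hSL.trans (hL.le.trans (sorth_antitone ω hSL))

theorem eq_sorth_inf_of_le_of_eq_sorth {ω : LinearMap.BilinForm ℝ V} {S L U : Submodule ℝ V}
    (hSL : S ≤ L) (hL : L = sorth ω L) (hSU : S ≤ U) (hco : sorth ω S ⊓ U ≤ S) :
    S = sorth ω S ⊓ U :=
  le_antisymm (le_inf (le_sorth_of_le_of_eq_sorth hSL hL) hSU) hco

theorem type_delta_is_elementary_general
    (ω : LinearMap.BilinForm ℝ V)
    (A B : Submodule ℝ V) (hAlag : A = sorth ω A) (hBlag : B = sorth ω B)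
    (hAB : A ⊓ B = ⊥)
    (m : ℕ) (Vs As Bs : Fin m → Submodule ℝ V)
    (hAle : ∀ i, As i ≤ Vs i) (hBle : ∀ i, Bs i ≤ Vs i)
    (hAco : ∀ i, sorth ω (As i) ⊓ Vs i ≤ As i)
    (hBco : ∀ i, sorth ω (Bs i) ⊓ Vs i ≤ Bs i)
    (hAsum : A = ⨆ i, As i) (hBsum : B = ⨆ i, Bs i) :
    ∀ i, As i = sorth ω (As i) ⊓ Vs i ∧ Bs i = sorth ω (Bs i) ⊓ Vs i ∧
      As i ⊓ Bs i = ⊥ := by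
  intro i
  have hAi : As i ≤ A := hAsum ▸ le_iSup As i
  have hBi : Bs i ≤ B := hBsum ▸ le_iSup Bs i
  exact ⟨eq_sorth_inf_of_le_of_eq_sorth hAi hAlag (hAle i) (hAco i),
    eq_sorth_inf_of_le_of_eq_sorth hBi hBlag (hBle i) (hBco i),
    eq_bot_iff.2 (hAB ▸ inf_le_inf hAi hBi)⟩

theorem type_delta_is_elementary [FiniteDimensional ℝ V]
    (ω : LinearMap.BilinForm ℝ V) (hω : ω.Nondegenerate) (hωalt : ω.IsAlt)
    (A B : Submodule ℝ V) (hAlag : A = sorth ω A) (hBlag : B = sorth ω B)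
    (hAB : A ⊓ B = ⊥)
    (m : ℕ) (Vs As Bs : Fin m → Submodule ℝ V)
    (hint : DirectSum.IsInternal Vs)
    (horth : ∀ i j, i ≠ j → OrthSub ω (Vs i) (Vs j))
    (hsymp : ∀ i, Vs i ⊓ sorth ω (Vs i) = ⊥)
    (hAle : ∀ i, As i ≤ Vs i) (hBle : ∀ i, Bs i ≤ Vs i)
    (hAco : ∀ i, sorth ω (As i) ⊓ Vs i ≤ As i)
    (hBco : ∀ i, sorth ω (Bs i) ⊓ Vs i ≤ Bs i)
    (hAsum : A = ⨆ i, As i) (hBsum : B = ⨆ i, Bs i) :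
    ∀ i, As i = sorth ω (As i) ⊓ Vs i ∧ Bs i = sorth ω (Bs i) ⊓ Vs i ∧
      As i ⊓ Bs i = ⊥ :=
  type_delta_is_elementary_general ω A B hAlag hBlag hAB m Vs As Bs hAle hBle hAco hBco hAsum hBsum
end

section
/- (Uniqueness of elementary invariants) Let (A,B) be a coisotropic pair in (V,ω) and suppose V = V₁ ⊕ ... ⊕ V₅, A = A₁ ⊕ ... ⊕ A₅, B = B₁ ⊕ ... ⊕ B₅ and V = V₁' ⊕ ... ⊕ V₅', A = A₁' ⊕ ... ⊕ A₅', B = B₁' ⊕ ... ⊕ B₅' are two elementary decompositions of (A,B), both with summand types ordered (λ, δ, σ, μ_B, μ_A). Then dim Vᵢ = dim Vᵢ' for each i = 1,...,5. -/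
open Module

variable {V : Type*} [AddCommGroup V] [Module ℝ V]

/-!
The dimensions of the summands are read off from five subspaces built from `(A, B)` alone:
`A^ω ∩ B^ω`, `A^ω`, `A^ω ∩ B`, `A ∩ B^ω` and `A ∩ B`. Because the `Vᵢ` are pairwise orthogonal
and span `V`, the symplectic orthogonal is computed summand by summand,
`A^ω = ⨁ (Aᵢ^ω ∩ Vᵢ)`, which makes these five subspaces `A₁`, `A₁ ⊕ A₂ ⊕ A₄`, `A₁ ⊕ A₄`,
`A₁ ⊕ B₅` and `A₁ ⊕ V₃ ⊕ A₄ ⊕ B₅`. A lagrangian subspace of a symplectic space has half its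
dimension, so `dim V₁ = 2 dim A₁`, `dim V₂ = 2 dim A₂`, `dim V₄ = 2 dim A₄`, `dim V₅ = 2 dim B₅`,
and solving for the `dim Vᵢ` expresses each of them through the five intrinsic dimensions.
-/

namespace Submodule

variable {R M ι : Type*} [Ring R] [AddCommGroup M] [Module R M] [Fintype ι]

theorem mem_iSup_iff_exists_fintype_sum (p : ι → Submodule R M) (v : M) :
    v ∈ ⨆ i, p i ↔ ∃ x : ι → M, (∀ i, x i ∈ p i) ∧ ∑ i, x i = v := by
  have := mem_iSup_finset_iff_exists_sum (s := Finset.univ) p v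
  simp only [Finset.mem_univ, iSup_pos] at this
  rw [this]
  exact ⟨fun ⟨μ, hμ⟩ => ⟨fun i => μ i, fun i => (μ i).2, hμ⟩,
    fun ⟨x, hx, hs⟩ => ⟨fun i => ⟨x i, hx i⟩, hs⟩⟩

theorem _root_.iSupIndep.iSup_inf_iSup {Vs X Y : ι → Submodule R M} (h : iSupIndep Vs)
    (hX : ∀ i, X i ≤ Vs i) (hY : ∀ i, Y i ≤ Vs i) :
    (⨆ i, X i) ⊓ (⨆ i, Y i) = ⨆ i, X i ⊓ Y i := by
  refine le_antisymm ?_ (iSup_le fun i => inf_le_inf (le_iSup X i) (le_iSup Y i))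
  rintro v ⟨hvX, hvY⟩
  obtain ⟨x, hx, rfl⟩ := (mem_iSup_iff_exists_fintype_sum X _).mp hvX
  obtain ⟨y, hy, hxy⟩ := (mem_iSup_iff_exists_fintype_sum Y _).mp hvY
  have hxy : ∀ i, x i = y i := fun i =>
    (iSupIndep_iff_finsetSum_eq_imp_eq Vs).mp h Finset.univ x y
      (fun i _ => ⟨hX i (hx i), hY i (hy i)⟩) hxy.symm i (Finset.mem_univ i)
  exact sum_mem fun i _ => mem_iSup_of_mem i ⟨hx i, hxy i ▸ hy i⟩

end Submodule

theorem iSupIndep.finrank_iSup {K M ι : Type*} [Field K] [AddCommGroup M] [Module K M]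
    [FiniteDimensional K M] [Fintype ι] {X : ι → Submodule K M} (h : iSupIndep X) :
    finrank K ↥(⨆ i, X i) = ∑ i, finrank K (X i) := by
  classical
  let e : (Π₀ i, X i) ≃ₗ[K] ↥(⨆ i, X i) :=
    (LinearEquiv.ofInjective _ h.dfinsupp_lsum_injective).trans
      (LinearEquiv.ofEq _ _ (Submodule.iSup_eq_range_dfinsupp_lsum X).symm)
  rw [← e.finrank_eq, (DFinsupp.linearEquivFunOnFintype (R := K) (M := fun i => X i)).finrank_eq,
    Module.finrank_pi_fintype]

/- `Z` lets the caller name the summands: `simp` cannot rewrite `W` inside `finrank K ↥W`,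
whose instance arguments depend on `W`. -/
theorem iSupIndep.finrank_iSup_inf_iSup {K M ι : Type*} [Field K] [AddCommGroup M] [Module K M]
    [FiniteDimensional K M] [Fintype ι] {Vs X Y Z : ι → Submodule K M} (h : iSupIndep Vs)
    (hX : ∀ i, X i ≤ Vs i) (hY : ∀ i, Y i ≤ Vs i) (hZ : ∀ i, X i ⊓ Y i = Z i) :
    finrank K ↥((⨆ i, X i) ⊓ ⨆ i, Y i) = ∑ i, finrank K (Z i) := by
  have hZle : ∀ i, Z i ≤ Vs i := fun i => hZ i ▸ inf_le_left.trans (hX i)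
  rw [h.iSup_inf_iSup hX hY, iSup_congr hZ, (h.mono hZle).finrank_iSup]

theorem sum_finrank_vecCons {K M : Type*} [Field K] [AddCommGroup M] [Module K M]
    (W₀ W₁ W₂ W₃ W₄ : Submodule K M) :
    ∑ i, finrank K ↥(![W₀, W₁, W₂, W₃, W₄] i) =
      finrank K W₀ + finrank K W₁ + finrank K W₂ + finrank K W₃ + finrank K W₄ := by
  rw [Fin.sum_univ_five]
  rfl

theorem sorth_iSup_of_orthSub {ι : Type*} [Fintype ι] {ω : LinearMap.BilinForm ℝ V}
    {Vs X : ι → Submodule ℝ V} (htop : ⨆ i, Vs i = ⊤)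
    (horth : ∀ i j, i ≠ j → OrthSub ω (Vs i) (Vs j)) (hX : ∀ i, X i ≤ Vs i) :
    sorth ω (⨆ i, X i) = ⨆ i, sorth ω (X i) ⊓ Vs i := by
  apply le_antisymm
  · intro v hv
    obtain ⟨x, hx, rfl⟩ := (Submodule.mem_iSup_iff_exists_fintype_sum Vs v).mp
      (htop ▸ Submodule.mem_top)
    refine Submodule.sum_mem _ fun i _ => Submodule.mem_iSup_of_mem i ⟨fun w hw => ?_, hx i⟩
    have hcomp : ω (∑ j, x j) w = ω (x i) w := by
      rw [map_sum, LinearMap.sum_apply]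
      exact Finset.sum_eq_single i (fun j _ hji => horth j i hji _ (hx j) _ (hX i hw))
        (by simp)
    rw [← hcomp]
    exact hv w (Submodule.mem_iSup_of_mem i hw)
  · refine iSup_le fun i v ⟨hvX, hvV⟩ w hw => ?_
    obtain ⟨y, hy, rfl⟩ := (Submodule.mem_iSup_iff_exists_fintype_sum X w).mp hw
    rw [map_sum]
    refine Finset.sum_eq_zero fun j _ => ?_
    rcases eq_or_ne i j with rfl | hij
    · exact hvX _ (hy i)
    · exact horth i j hij v hvV _ (hX j (hy j))

theorem finrank_eq_two_mul_of_lagrangian [FiniteDimensional ℝ V] {ω : LinearMap.BilinForm ℝ V}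
    (hω : ω.IsRefl) {U L : Submodule ℝ V} (hU : U ⊓ sorth ω U = ⊥) (hL : L = sorth ω L ⊓ U) :
    finrank ℝ U = 2 * finrank ℝ L := by
  have hLU : L ≤ U := hL.trans_le inf_le_right
  have hnd : (ω.restrict U).Nondegenerate := by
    refine (LinearMap.IsRefl.nondegenerate_iff_separatingLeft (B := ω.restrict U)
      fun x y => hω x y).mpr fun x hx => ?_
    have hmem : (x : V) ∈ U ⊓ sorth ω U := ⟨x.2, fun w hw => hx ⟨w, hw⟩⟩
    rw [hU] at hmem
    exact Subtype.ext hmem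
  set L' : Submodule ℝ U := L.comap U.subtype
  have hL' : (ω.restrict U).orthogonal L' = L' := by
    ext x
    rw [LinearMap.BilinForm.mem_orthogonal_iff, Submodule.mem_comap, Submodule.subtype_apply]
    conv_rhs => rw [hL]
    exact ⟨fun hx => ⟨fun w hw => hω _ _ (hx ⟨w, hLU hw⟩ hw), x.2⟩,
      fun hx n hn => hω _ _ (hx.1 _ hn)⟩
  have hdim := LinearMap.BilinForm.finrank_orthogonal hnd L'
  rw [hL', (Submodule.comapSubtypeEquivOfLe hLU).finrank_eq] at hdim
  have := Submodule.finrank_mono hLU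
  omega

/-- The `ℕ`-subtractions are exact, by `IsElemDecomp.finrank_eq_elementaryInvariants`. -/
noncomputable def elementaryInvariants (ω : LinearMap.BilinForm ℝ V) (A B : Submodule ℝ V) :
    Fin 5 → ℕ :=
  let d := fun W : Submodule ℝ V => finrank ℝ W
  ![2 * d (sorth ω A ⊓ sorth ω B),
    2 * (d (sorth ω A) - d (sorth ω A ⊓ B)),
    d (A ⊓ B) + d (sorth ω A ⊓ sorth ω B) - d (sorth ω A ⊓ B) - d (A ⊓ sorth ω B),
    2 * (d (sorth ω A ⊓ B) - d (sorth ω A ⊓ sorth ω B)),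
    2 * (d (A ⊓ sorth ω B) - d (sorth ω A ⊓ sorth ω B))]

namespace IsElemDecomp

variable {ω : LinearMap.BilinForm ℝ V} {A B : Submodule ℝ V} {Vs As Bs : Fin 5 → Submodule ℝ V}

theorem sorth_left_eq_iSup (h : IsElemDecomp ω A B Vs As Bs) :
    sorth ω A = ⨆ i, sorth ω (As i) ⊓ Vs i := by
  obtain ⟨hint, horth, -, hAle, -, rfl, -⟩ := h
  exact sorth_iSup_of_orthSub hint.submodule_iSup_eq_top horth hAle

theorem sorth_right_eq_iSup (h : IsElemDecomp ω A B Vs As Bs) :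
    sorth ω B = ⨆ i, sorth ω (Bs i) ⊓ Vs i := by
  obtain ⟨hint, horth, -, -, hBle, -, rfl, -⟩ := h
  exact sorth_iSup_of_orthSub hint.submodule_iSup_eq_top horth hBle

theorem sorth_inf_summand_left (h : IsElemDecomp ω A B Vs As Bs) :
    ∀ i, sorth ω (As i) ⊓ Vs i = ![As 0, As 1, ⊥, As 3, ⊥] i := by
  obtain ⟨-, -, hsymp, -, -, -, -, ⟨-, hlam⟩, ⟨hdelta, -⟩, ⟨hsigma, -⟩, ⟨-, hmuB⟩, ⟨hmuA, -⟩⟩ := h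
  intro i
  fin_cases i
  · exact hlam.symm
  · exact hdelta.symm
  · simpa [hsigma, inf_comm] using hsymp 2
  · exact hmuB.symm
  · simpa [hmuA, inf_comm] using hsymp 4

theorem sorth_inf_summand_right (h : IsElemDecomp ω A B Vs As Bs) :
    ∀ i, sorth ω (Bs i) ⊓ Vs i = ![As 0, Bs 1, ⊥, ⊥, Bs 4] i := by
  obtain ⟨-, -, hsymp, -, -, -, -, ⟨hlam', hlam⟩, ⟨-, hdelta, -⟩, ⟨-, hsigma⟩, ⟨hmuB, -⟩,
    ⟨-, hmuA⟩⟩ := h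
  intro i
  fin_cases i
  · simpa [← hlam'] using hlam.symm
  · exact hdelta.symm
  · simpa [hsigma, inf_comm] using hsymp 2
  · simpa [hmuB, inf_comm] using hsymp 3
  · exact hmuA.symm

theorem finrank_intrinsic_subspaces [FiniteDimensional ℝ V] (h : IsElemDecomp ω A B Vs As Bs) :
    finrank ℝ ↥(sorth ω A ⊓ sorth ω B) = finrank ℝ (As 0) ∧
    finrank ℝ ↥(sorth ω A) = finrank ℝ (As 0) + finrank ℝ (As 1) + finrank ℝ (As 3) ∧
    finrank ℝ ↥(sorth ω A ⊓ B) = finrank ℝ (As 0) + finrank ℝ (As 3) ∧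
    finrank ℝ ↥(A ⊓ sorth ω B) = finrank ℝ (As 0) + finrank ℝ (Bs 4) ∧
    finrank ℝ ↥(A ⊓ B) =
      finrank ℝ (As 0) + finrank ℝ (Vs 2) + finrank ℝ (As 3) + finrank ℝ (Bs 4) := by
  have hsA := h.sorth_inf_summand_left
  have hsB := h.sorth_inf_summand_right
  rw [h.sorth_left_eq_iSup, h.sorth_right_eq_iSup]
  obtain ⟨hint, -, -, hAle, hBle, rfl, rfl, ⟨hlam, -⟩, ⟨-, -, hdelta⟩, ⟨hsigmaA, hsigmaB⟩,
    ⟨hmuB, -⟩, ⟨hmuA, -⟩⟩ := h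
  have hindep := hint.submodule_iSupIndep
  have hsorth : ∀ {C : Fin 5 → Submodule ℝ V} i, sorth ω (C i) ⊓ Vs i ≤ Vs i :=
    fun _ => inf_le_right
  refine ⟨?_, ?_, ?_, ?_, ?_⟩
  · rw [hindep.finrank_iSup_inf_iSup hsorth hsorth (Z := ![As 0, ⊥, ⊥, ⊥, ⊥])
      (by intro i; fin_cases i <;> simp [hsA, hsB, hdelta]), sum_finrank_vecCons]
    simp
  · rw [← inf_top_eq (⨆ i, _), ← hint.submodule_iSup_eq_top,
      hindep.finrank_iSup_inf_iSup hsorth (fun _ => le_rfl) (Z := ![As 0, As 1, ⊥, As 3, ⊥])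
      (by intro i; fin_cases i <;> simp [hsA, hAle]), sum_finrank_vecCons]
    simp
  · rw [hindep.finrank_iSup_inf_iSup hsorth hBle (Z := ![As 0, ⊥, ⊥, As 3, ⊥])
      (by intro i; fin_cases i <;> simp [hsA, ← hlam, hdelta, hmuB, hAle 3]), sum_finrank_vecCons]
    simp
  · rw [hindep.finrank_iSup_inf_iSup hAle hsorth (Z := ![As 0, ⊥, ⊥, ⊥, Bs 4])
      (by intro i; fin_cases i <;> simp [hsB, hdelta, hmuA, hBle 4]), sum_finrank_vecCons]
    simp
  · rw [hindep.finrank_iSup_inf_iSup hAle hBle (Z := ![As 0, ⊥, Vs 2, As 3, Bs 4])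
      (by intro i; fin_cases i <;> simp [← hlam, hdelta, hsigmaA, hsigmaB, hmuB, hmuA, hAle 3,
        hBle 4]), sum_finrank_vecCons]
    simp

theorem finrank_summand_eq_two_mul [FiniteDimensional ℝ V] (hω : ω.IsRefl)
    (h : IsElemDecomp ω A B Vs As Bs) :
    finrank ℝ (Vs 0) = 2 * finrank ℝ (As 0) ∧ finrank ℝ (Vs 1) = 2 * finrank ℝ (As 1) ∧
      finrank ℝ (Vs 3) = 2 * finrank ℝ (As 3) ∧ finrank ℝ (Vs 4) = 2 * finrank ℝ (Bs 4) := by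
  obtain ⟨-, -, hsymp, -, -, -, -, ⟨-, hlam⟩, ⟨hdelta, -⟩, -, ⟨-, hmuB⟩, ⟨-, hmuA⟩⟩ := h
  exact ⟨finrank_eq_two_mul_of_lagrangian hω (hsymp 0) hlam,
    finrank_eq_two_mul_of_lagrangian hω (hsymp 1) hdelta,
    finrank_eq_two_mul_of_lagrangian hω (hsymp 3) hmuB,
    finrank_eq_two_mul_of_lagrangian hω (hsymp 4) hmuA⟩

theorem finrank_eq_elementaryInvariants [FiniteDimensional ℝ V] (hω : ω.IsRefl)
    (h : IsElemDecomp ω A B Vs As Bs) :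
    ∀ i, finrank ℝ (Vs i) = elementaryInvariants ω A B i := by
  obtain ⟨e₀, e₁, e₂, e₃, e₄⟩ := h.finrank_intrinsic_subspaces
  obtain ⟨v₀, v₁, v₃, v₄⟩ := h.finrank_summand_eq_two_mul hω
  intro i
  match i with
  | 0 | 1 | 2 | 3 | 4 =>
    simp only [elementaryInvariants, Matrix.cons_val_zero, Matrix.cons_val_one, Matrix.cons_val]
    omega

end IsElemDecomp

theorem elementary_invariants_unique_general [FiniteDimensional ℝ V]
    (ω : LinearMap.BilinForm ℝ V) (hωalt : ω.IsAlt)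
    (A B : Submodule ℝ V)
    (Vs As Bs Vs' As' Bs' : Fin 5 → Submodule ℝ V)
    (hdec : IsElemDecomp ω A B Vs As Bs)
    (hdec' : IsElemDecomp ω A B Vs' As' Bs') :
    ∀ i, finrank ℝ (Vs i) = finrank ℝ (Vs' i) := fun i =>
  (hdec.finrank_eq_elementaryInvariants hωalt.isRefl i).trans
    (hdec'.finrank_eq_elementaryInvariants hωalt.isRefl i).symm

theorem elementary_invariants_unique [FiniteDimensional ℝ V]
    (ω : LinearMap.BilinForm ℝ V) (hω : ω.Nondegenerate) (hωalt : ω.IsAlt)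
    (A B : Submodule ℝ V) (hA : sorth ω A ≤ A) (hB : sorth ω B ≤ B)
    (Vs As Bs Vs' As' Bs' : Fin 5 → Submodule ℝ V)
    (hdec : IsElemDecomp ω A B Vs As Bs)
    (hdec' : IsElemDecomp ω A B Vs' As' Bs') :
    ∀ i, finrank ℝ (Vs i) = finrank ℝ (Vs' i) :=
  elementary_invariants_unique_general ω hωalt A B Vs As Bs Vs' As' Bs' hdec hdec'
end
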